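/- arXiv:1805.03853 — 2 statements merged into one kernel-verified Lean document; each statement's English description precedes it below -/
import Mathlib

section
/- Let ξ_1, …, ξ_l be pairwise distinct points in the open unit disk. Then for every z with max_{1≤j≤l} |ξ_j| < |z| < 2, the TM basis function satisfies ψ_l(z) = Σ_{d=1}^∞ a_{dl} z^{−d}, where for d ≥ 1, a_{dl} = √(1−|ξ_l|²) · Σ_{j'=1}^l ξ_{j'}^{d−1} · (∏_{j=1}^{l−1} (1−conj(ξ_j)ξ_{j'})) / (∏_{j=1, j≠j'}^{l} (ξ_{j'}−ξ_j)) (with the convention that for l = 1 the quotient of products equals 1), and the coefficient of z^0 in this Laurent expansion is a_{0l} = 0. -/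
open Finset

/-- The Takenaka–Malmquist basis function ψ_{l+1} (0-indexed `l`), with poles
`ξ 0, ξ 1, …` (so `ξ j` is the paper's ξ_{j+1}). -/
noncomputable def TM (ξ : ℕ → ℂ) (l : ℕ) (z : ℂ) : ℂ :=
  ((Real.sqrt (1 - ‖ξ l‖ ^ 2) : ℂ) / (z - ξ l)) *
    ∏ j ∈ Finset.range l, (1 - (starRingEnd ℂ) (ξ j) * z) / (z - ξ j)

lemma tm_partial_fraction (ξ : ℕ → ℂ) (l : ℕ)
    (hdist : ∀ j j', j ≤ l → j' ≤ l → j ≠ j' → ξ j ≠ ξ j')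
    (z : ℂ) (hz : ∀ j ≤ l, z ≠ ξ j) :
    (∏ j ∈ Finset.range l, (1 - (starRingEnd ℂ) (ξ j) * z)) /
      (∏ j ∈ Finset.range (l+1), (z - ξ j)) =
    ∑ j' ∈ Finset.range (l+1),
      ((∏ j ∈ Finset.range l, (1 - (starRingEnd ℂ) (ξ j) * ξ j')) /
        (∏ j ∈ (Finset.range (l+1)).erase j', (ξ j' - ξ j))) * (z - ξ j')⁻¹ := by
  have hmem : ∀ j ∈ Finset.range (l+1), j ≤ l := fun j hj => Nat.lt_succ_iff.mp (mem_range.mp hj)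
  have hinj : Set.InjOn ξ (Finset.range (l+1)) := by
    intro i hi j hj h
    by_contra hne
    exact hdist i j (hmem i (by simpa using hi)) (hmem j (by simpa using hj)) hne h
  set f : Polynomial ℂ := ∏ j ∈ Finset.range l,
    (1 - Polynomial.C ((starRingEnd ℂ) (ξ j)) * Polynomial.X) with hfdef
  have hdeg : f.degree < (Finset.range (l+1)).card := by
    have h1 : f.natDegree ≤ l := by
      refine le_trans (Polynomial.natDegree_prod_le _ _) ?_
      calc ∑ j ∈ Finset.range l,
            (1 - Polynomial.C ((starRingEnd ℂ) (ξ j)) * Polynomial.X).natDegree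
          ≤ ∑ _j ∈ Finset.range l, 1 := by
            refine Finset.sum_le_sum fun j _ => ?_
            refine le_trans (Polynomial.natDegree_sub_le _ _) ?_
            simp [Polynomial.natDegree_C_mul_le]
            exact le_trans (Polynomial.natDegree_C_mul_le _ _) (by simp)
        _ = l := by simp
    calc f.degree ≤ (f.natDegree : WithBot ℕ) := Polynomial.degree_le_natDegree
      _ ≤ (l : WithBot ℕ) := by exact_mod_cast h1
      _ < ((Finset.range (l+1)).card : WithBot ℕ) := by
          rw [Finset.card_range]; exact_mod_cast Nat.lt_succ_self l
  have hf := Lagrange.eq_interpolate (v := ξ) hinj hdeg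
  have key : (∏ j ∈ Finset.range l, (1 - (starRingEnd ℂ) (ξ j) * z)) =
      ∑ i ∈ Finset.range (l+1),
        (∏ j ∈ Finset.range l, (1 - (starRingEnd ℂ) (ξ j) * ξ i)) *
          ∏ j ∈ (Finset.range (l+1)).erase i, ((ξ i - ξ j)⁻¹ * (z - ξ j)) := by
    have := congrArg (Polynomial.eval z) hf
    simpa [hfdef, Lagrange.interpolate_apply, Lagrange.basis, Lagrange.basisDivisor,
      Polynomial.eval_prod, Polynomial.eval_finset_sum] using this
  rw [key, Finset.sum_div]
  refine Finset.sum_congr rfl fun i hi => ?_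
  have hzi : z - ξ i ≠ 0 := sub_ne_zero.mpr (hz i (hmem i hi))
  have hDz : ∀ j ∈ (Finset.range (l+1)).erase i, z - ξ j ≠ 0 := fun j hj =>
    sub_ne_zero.mpr (hz j (hmem j (Finset.mem_of_mem_erase hj)))
  have hDξ : (∏ j ∈ (Finset.range (l+1)).erase i, (ξ i - ξ j)) ≠ 0 := by
    refine Finset.prod_ne_zero_iff.mpr fun j hj => ?_
    rcases Finset.mem_erase.mp hj with ⟨hji, hj'⟩
    exact sub_ne_zero.mpr (hdist i j (hmem i hi) (hmem j hj') (Ne.symm hji))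
  have hDzprod : (∏ j ∈ (Finset.range (l+1)).erase i, (z - ξ j)) ≠ 0 :=
    Finset.prod_ne_zero_iff.mpr hDz
  rw [Finset.prod_mul_distrib, ← Finset.mul_prod_erase _ _ hi]
  rw [Finset.prod_inv_distrib]
  field_simp
  ring
  exact Finset.prod_congr rfl fun x _ => by ring

/-- For pairwise distinct poles in the open unit disk and
max_j |ξ_j| < |z| < 2, the TM basis function ψ_{l+1} = `TM ξ l` has the Laurent
expansion Σ_{d=0}^∞ a_d z^{−d} with a_0 = 0 and, for d ≥ 1,
a_d = √(1−|ξ_{l+1}|²) Σ_{j'} ξ_{j'}^{d−1} (∏_{j} (1−conj(ξ_j)ξ_{j'})) / (∏_{j≠j'} (ξ_{j'}−ξ_j)),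
where j' runs over the l+1 poles, the numerator product over the first l poles, and
the convention for a single pole gives quotient 1 (empty products). -/
theorem tm_laurent_coeff_distinct_poles (ξ : ℕ → ℂ) (hξ : ∀ j, ‖ξ j‖ < 1)
    (l : ℕ) (hdist : ∀ j j', j ≤ l → j' ≤ l → j ≠ j' → ξ j ≠ ξ j')
    (z : ℂ) (hz1 : ∀ j ≤ l, ‖ξ j‖ < ‖z‖)
    (hz2 : ‖z‖ < 2) :
    HasSum (fun d : ℕ =>
        (if d = 0 then (0 : ℂ) else
          (Real.sqrt (1 - ‖ξ l‖ ^ 2) : ℂ) *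
            ∑ j' ∈ Finset.range (l + 1), ξ j' ^ (d - 1) *
              ((∏ j ∈ Finset.range l, (1 - (starRingEnd ℂ) (ξ j) * ξ j')) /
                (∏ j ∈ (Finset.range (l + 1)).erase j', (ξ j' - ξ j))))
          * z ^ (-(d : ℤ)))
      (TM ξ l z) := by
  have hzabs : (0:ℝ) < ‖z‖ :=
    lt_of_le_of_lt (norm_nonneg _) (hz1 0 (Nat.zero_le l))
  have hz0 : z ≠ 0 := fun h => by simp [h] at hzabs
  have hmem : ∀ j ∈ Finset.range (l+1), j ≤ l := fun j hj => Nat.lt_succ_iff.mp (mem_range.mp hj)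
  have hzξ : ∀ j ≤ l, z ≠ ξ j := fun j hj h =>
    absurd (hz1 j hj) (by rw [← h]; exact lt_irrefl _)
  set Cc : ℂ := (Real.sqrt (1 - ‖ξ l‖ ^ 2) : ℂ) with hCc
  set Q : ℕ → ℂ := fun j' =>
    (∏ j ∈ Finset.range l, (1 - (starRingEnd ℂ) (ξ j) * ξ j')) /
      (∏ j ∈ (Finset.range (l + 1)).erase j', (ξ j' - ξ j)) with hQ
  -- geometric series for each pole
  have geo : ∀ j' ∈ Finset.range (l+1),
      HasSum (fun d : ℕ => if d = 0 then (0:ℂ) else ξ j' ^ (d-1) * z ^ (-(d:ℤ)))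
        ((z - ξ j')⁻¹) := by
    intro j' hj'
    have hr : ‖ξ j' / z‖ < 1 := by
      rw [norm_div]
      rw [div_lt_one (by simpa using hzabs)]
      exact hz1 j' (hmem j' hj')
    have h1 := (hasSum_geometric_of_norm_lt_one hr).mul_right z⁻¹
    have hzξ' : z - ξ j' ≠ 0 := sub_ne_zero.mpr (hzξ j' (hmem j' hj'))
    have hval : (1 - ξ j' / z)⁻¹ * z⁻¹ = (z - ξ j')⁻¹ := by
      rw [← mul_inv]; congr 1; field_simp
    have h2 : HasSum (fun n : ℕ => ξ j' ^ n * z ^ (-((n:ℤ)+1))) ((z - ξ j')⁻¹) := by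
      rw [← hval]
      convert h1 using 2 with n
      case e'_3 => rfl
      rw [div_pow, zpow_neg,
        show ((n:ℤ)+1) = ((n+1 : ℕ) : ℤ) by push_cast; ring, zpow_natCast, pow_succ]
      field_simp
    have h3 := (hasSum_nat_add_iff
      (f := fun d : ℕ => if d = 0 then (0:ℂ) else ξ j' ^ (d-1) * z ^ (-(d:ℤ))) 1).mp
      (by simpa [Nat.succ_ne_zero] using h2)
    simpa using h3
  have total : HasSum
      (fun d : ℕ => ∑ j' ∈ Finset.range (l+1),
        Cc * Q j' * (if d = 0 then (0:ℂ) else ξ j' ^ (d-1) * z ^ (-(d:ℤ))))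
      (∑ j' ∈ Finset.range (l+1), Cc * Q j' * (z - ξ j')⁻¹) :=
    hasSum_sum fun j' hj' => (geo j' hj').mul_left (Cc * Q j')
  have hTMval : TM ξ l z = ∑ j' ∈ Finset.range (l+1), Cc * Q j' * (z - ξ j')⁻¹ := by
    have hTM : TM ξ l z = Cc *
        ((∏ j ∈ Finset.range l, (1 - (starRingEnd ℂ) (ξ j) * z)) /
          (∏ j ∈ Finset.range (l+1), (z - ξ j))) := by
      rw [TM, Finset.prod_div_distrib, Finset.prod_range_succ, div_mul_div_comm,
        mul_comm (z - ξ l), mul_div_assoc]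
    rw [hTM, tm_partial_fraction ξ l hdist z hzξ, Finset.mul_sum]
    exact Finset.sum_congr rfl fun j' _ => by rw [hQ]; ring
  rw [hTMval]
  convert total using 2 with d
  by_cases hd : d = 0
  · simp [hd]
  · simp only [if_neg hd, Finset.mul_sum, Finset.sum_mul]
    exact Finset.sum_congr rfl fun j' _ => by rw [hQ]; ring
end

section
/- For any sequence of poles ξ_1, ξ_2, … in the open unit disk, the TM basis functions are orthonormal on the unit circle: for all k, l ≥ 1, ⟨ψ_k, ψ_l⟩ = (1/2π) ∫_0^{2π} ψ_k(e^{iω}) conj(ψ_l(e^{iω})) dω equals 1 if k = l and 0 if k ≠ l. -/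
open Finset
open Complex Metric

/-- Inner product of two functions on the unit circle:
⟨f, g⟩ = (1/2π) ∫₀^{2π} f(e^{iω}) conj(g(e^{iω})) dω. -/
noncomputable def circInner (f g : ℂ → ℂ) : ℂ :=
  ((1 / (2 * Real.pi) : ℝ) : ℂ) *
    ∫ ω in (0 : ℝ)..(2 * Real.pi),
      f (Complex.exp (Complex.I * ω)) * (starRingEnd ℂ) (g (Complex.exp (Complex.I * ω)))

section aux
variable {ξ z : ℂ}

lemma den_ne (hξ : ‖ξ‖ < 1) (hz : ‖z‖ ≤ 1) :
    1 - (starRingEnd ℂ) ξ * z ≠ 0 := by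
  intro h
  have h1 : (starRingEnd ℂ) ξ * z = 1 := by linear_combination -h
  have : ‖(starRingEnd ℂ) ξ * z‖ < 1 := by
    rw [norm_mul, Complex.norm_conj]
    calc ‖ξ‖ * ‖z‖ ≤ ‖ξ‖ * 1 :=
          mul_le_mul_of_nonneg_left hz (norm_nonneg _)
      _ < 1 := by simpa using hξ
  rw [h1] at this; simp at this

lemma sub_ne (hξ : ‖ξ‖ < 1) (hz : ‖z‖ = 1) :
    z - ξ ≠ 0 := by
  intro h
  have : z = ξ := by linear_combination h
  rw [this] at hz; exact absurd hz (ne_of_lt hξ)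

lemma z_ne (hz : ‖z‖ = 1) : z ≠ 0 := by
  intro h; rw [h] at hz; simp at hz

lemma conj_inv' (hz : ‖z‖ = 1) : (starRingEnd ℂ) z = z⁻¹ :=
  (Complex.inv_eq_conj (by exact hz)).symm

lemma e1 (hz : ‖z‖ = 1) :
    z⁻¹ - (starRingEnd ℂ) ξ = (1 - (starRingEnd ℂ) ξ * z) * z⁻¹ := by
  have hz0 := z_ne hz; field_simp

lemma e2 (hz : ‖z‖ = 1) :
    1 - ξ * z⁻¹ = (z - ξ) * z⁻¹ := by
  have hz0 := z_ne hz; field_simp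

lemma conj_blaschke (hz : ‖z‖ = 1) :
    (starRingEnd ℂ) ((1 - (starRingEnd ℂ) ξ * z) / (z - ξ)) =
      (z - ξ) / (1 - (starRingEnd ℂ) ξ * z) := by
  have hz0 := z_ne hz
  simp only [map_div₀, map_sub, map_mul, map_one, Complex.conj_conj, conj_inv' hz]
  rw [e2 hz, e1 hz, mul_div_mul_right _ _ (inv_ne_zero hz0)]

lemma conj_front (hz : ‖z‖ = 1) (c : ℝ) :
    (starRingEnd ℂ) ((c : ℂ) / (z - ξ)) =
      (c : ℂ) * z / (1 - (starRingEnd ℂ) ξ * z) := by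
  have hz0 := z_ne hz
  simp only [map_div₀, map_sub, Complex.conj_ofReal, conj_inv' hz]
  rw [e1 hz, div_mul_eq_div_div, div_inv_eq_mul]
  ring

end aux

lemma conj_TM (ξ : ℕ → ℂ) (l : ℕ) {z : ℂ} (hz : ‖z‖ = 1) :
    (starRingEnd ℂ) (TM ξ l z) =
      ((Real.sqrt (1 - ‖ξ l‖ ^ 2) : ℂ) * z / (1 - (starRingEnd ℂ) (ξ l) * z)) *
        ∏ j ∈ Finset.range l, (z - ξ j) / (1 - (starRingEnd ℂ) (ξ j) * z) := by
  unfold TM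
  rw [map_mul, map_prod]
  congr 1
  · exact conj_front hz _
  · exact Finset.prod_congr rfl fun j _ => conj_blaschke hz

/-- pointwise product formula for `k ≤ l` on the circle -/
lemma point_eq (ξ : ℕ → ℂ) (hξ : ∀ j, ‖ξ j‖ < 1) {k l : ℕ} (hkl : k ≤ l)
    {z : ℂ} (hz : ‖z‖ = 1) :
    TM ξ k z * (starRingEnd ℂ) (TM ξ l z) =
      (Real.sqrt (1 - ‖ξ k‖ ^ 2) : ℂ) *
        (Real.sqrt (1 - ‖ξ l‖ ^ 2) : ℂ) * z *
        (∏ j ∈ Finset.Ico k l, (z - ξ j) / (1 - (starRingEnd ℂ) (ξ j) * z)) /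
        ((z - ξ k) * (1 - (starRingEnd ℂ) (ξ l) * z)) := by
  rw [conj_TM ξ l hz]
  unfold TM
  rw [← Finset.prod_range_mul_prod_Ico
    (fun j => (z - ξ j) / (1 - (starRingEnd ℂ) (ξ j) * z)) hkl]
  set P := ∏ j ∈ Finset.Ico k l, (z - ξ j) / (1 - (starRingEnd ℂ) (ξ j) * z) with hP
  set Q := ∏ j ∈ Finset.range k, (1 - (starRingEnd ℂ) (ξ j) * z) / (z - ξ j) with hQ
  set R := ∏ j ∈ Finset.range k, (z - ξ j) / (1 - (starRingEnd ℂ) (ξ j) * z) with hR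
  have hcancel : Q * R = 1 := by
    rw [hQ, hR, ← Finset.prod_mul_distrib]
    refine Finset.prod_eq_one fun j _ => ?_
    rw [div_mul_div_comm, mul_comm (1 - (starRingEnd ℂ) (ξ j) * z) (z - ξ j)]
    exact div_self (mul_ne_zero (sub_ne (hξ j) hz) (den_ne (hξ j) hz.le))
  calc ((Real.sqrt (1 - ‖ξ k‖ ^ 2) : ℂ) / (z - ξ k) * Q) *
      ((Real.sqrt (1 - ‖ξ l‖ ^ 2) : ℂ) * z / (1 - (starRingEnd ℂ) (ξ l) * z) *
        (R * P))
      = ((Real.sqrt (1 - ‖ξ k‖ ^ 2) : ℂ) / (z - ξ k)) *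
        ((Real.sqrt (1 - ‖ξ l‖ ^ 2) : ℂ) * z / (1 - (starRingEnd ℂ) (ξ l) * z)) *
        P * (Q * R) := by ring
    _ = _ := by rw [hcancel, mul_one, div_mul_div_comm]; ring

lemma key_cauchy (g : ℂ → ℂ) (hg : DiffContOnCl ℂ g (ball 0 1)) (w : ℂ)
    (hw : w ∈ ball (0 : ℂ) 1) (f : ℝ → ℂ)
    (hf : ∀ ω : ℝ, f ω = Complex.exp (Complex.I * ω) *
      (Complex.exp (Complex.I * ω) - w)⁻¹ * g (Complex.exp (Complex.I * ω))) :
    ((1 / (2 * Real.pi) : ℝ) : ℂ) * ∫ ω in (0:ℝ)..(2 * Real.pi), f ω = g w := by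
  have h := hg.circleIntegral_sub_inv_smul hw
  rw [circleIntegral] at h
  simp only [deriv_circleMap, smul_eq_mul, circleMap, ofReal_one, one_mul, zero_add] at h
  have hI : ∫ θ in (0:ℝ)..(2 * Real.pi), Complex.I * f θ = 2 * Real.pi * Complex.I * g w := by
    rw [← h]
    refine intervalIntegral.integral_congr fun θ _ => ?_
    rw [hf θ, mul_comm Complex.I (θ : ℂ)]
    ring
  rw [intervalIntegral.integral_const_mul] at hI
  have h2 : (∫ ω in (0:ℝ)..(2 * Real.pi), f ω) = 2 * Real.pi * g w := by
    apply mul_left_cancel₀ Complex.I_ne_zero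
    rw [hI]; ring
  rw [h2]
  have hpi : (Real.pi : ℂ) ≠ 0 := by exact_mod_cast Real.pi_ne_zero
  push_cast
  field_simp

lemma habs (ω : ℝ) : ‖Complex.exp (Complex.I * ω)‖ = 1 := by
  rw [mul_comm]; exact Complex.norm_exp_ofReal_mul_I ω

/-- pointwise identity for the diagonal case -/
lemma tm_norm_point (ξ : ℕ → ℂ) (hξ : ∀ j, ‖ξ j‖ < 1) (k : ℕ)
    {z : ℂ} (hz : ‖z‖ = 1) :
    TM ξ k z * (starRingEnd ℂ) (TM ξ k z) =
      z * (z - ξ k)⁻¹ *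
        (((Real.sqrt (1 - ‖ξ k‖ ^ 2) : ℂ)) ^ 2 /
          (1 - (starRingEnd ℂ) (ξ k) * z)) := by
  rw [point_eq ξ hξ le_rfl hz]
  rw [Finset.Ico_self, Finset.prod_empty, mul_one]
  have h1 := sub_ne (hξ k) hz
  have h2 := den_ne (hξ k) hz.le
  field_simp

/-- pointwise identity for the off-diagonal case `k < l` -/
lemma tm_ortho_point (ξ : ℕ → ℂ) (hξ : ∀ j, ‖ξ j‖ < 1) {k l : ℕ} (hkl : k < l)
    {z : ℂ} (hz : ‖z‖ = 1) :
    TM ξ k z * (starRingEnd ℂ) (TM ξ l z) =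
      z * (z - 0)⁻¹ *
        (((Real.sqrt (1 - ‖ξ k‖ ^ 2) : ℂ) *
            (Real.sqrt (1 - ‖ξ l‖ ^ 2) : ℂ) * z *
            ∏ j ∈ Finset.Ico (k+1) l, (z - ξ j)) /
          ((1 - (starRingEnd ℂ) (ξ l) * z) *
            ∏ j ∈ Finset.Ico k l, (1 - (starRingEnd ℂ) (ξ j) * z))) := by
  rw [point_eq ξ hξ hkl.le hz, Finset.prod_div_distrib,
    Finset.prod_eq_prod_Ico_succ_bot hkl (fun j => z - ξ j), sub_zero,
    mul_inv_cancel₀ (z_ne hz), one_mul]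
  have h1 := sub_ne (hξ k) hz
  have h2 := den_ne (hξ l) hz.le
  have hD : (∏ j ∈ Finset.Ico k l, (1 - (starRingEnd ℂ) (ξ j) * z)) ≠ 0 :=
    Finset.prod_ne_zero_iff.mpr fun j _ => den_ne (hξ j) hz.le
  field_simp

lemma abs_le_of_closure {z : ℂ} (hz : z ∈ closure (ball (0:ℂ) 1)) : ‖z‖ ≤ 1 := by
  rw [closure_ball (0:ℂ) one_ne_zero] at hz
  exact mem_closedBall_zero_iff.mp hz

lemma tm_norm (ξ : ℕ → ℂ) (hξ : ∀ j, ‖ξ j‖ < 1) (k : ℕ) :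
    circInner (TM ξ k) (TM ξ k) = 1 := by
  set g : ℂ → ℂ := fun z =>
    ((Real.sqrt (1 - ‖ξ k‖ ^ 2) : ℂ)) ^ 2 / (1 - (starRingEnd ℂ) (ξ k) * z)
    with hg_def
  have hg : DiffContOnCl ℂ g (ball 0 1) := by
    apply DifferentiableOn.diffContOnCl
    apply DifferentiableOn.div (differentiableOn_const _) (by fun_prop)
    exact fun z hz => den_ne (hξ k) (abs_le_of_closure hz)
  have hw : ξ k ∈ ball (0:ℂ) 1 := by
    rw [mem_ball_zero_iff]; exact hξ k
  have hkey := key_cauchy g hg (ξ k) hw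
    (fun ω => TM ξ k (Complex.exp (Complex.I * ω)) *
      (starRingEnd ℂ) (TM ξ k (Complex.exp (Complex.I * ω))))
    (fun ω => tm_norm_point ξ hξ k (habs ω))
  rw [circInner, hkey]
  have hlt : ‖ξ k‖ ^ 2 < 1 := by nlinarith [norm_nonneg (ξ k), hξ k]
  have h1 : (starRingEnd ℂ) (ξ k) * ξ k = ((‖ξ k‖ ^ 2 : ℝ) : ℂ) := by
    rw [mul_comm, Complex.mul_conj, ← Complex.sq_norm]
  have hsq : ((Real.sqrt (1 - ‖ξ k‖ ^ 2) : ℂ)) ^ 2 =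
      ((1 - ‖ξ k‖ ^ 2 : ℝ) : ℂ) := by
    rw [← Complex.ofReal_pow, Real.sq_sqrt (by linarith)]
  show ((Real.sqrt (1 - ‖ξ k‖ ^ 2) : ℂ)) ^ 2 /
      (1 - (starRingEnd ℂ) (ξ k) * ξ k) = 1
  rw [h1, hsq]
  rw [show (1 : ℂ) - ((‖ξ k‖ ^ 2 : ℝ) : ℂ) =
      ((1 - ‖ξ k‖ ^ 2 : ℝ) : ℂ) by push_cast; ring]
  exact div_self (Complex.ofReal_ne_zero.mpr (by linarith))

lemma tm_ortho_lt (ξ : ℕ → ℂ) (hξ : ∀ j, ‖ξ j‖ < 1) {k l : ℕ} (hkl : k < l) :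
    circInner (TM ξ k) (TM ξ l) = 0 := by
  set g : ℂ → ℂ := fun z =>
    ((Real.sqrt (1 - ‖ξ k‖ ^ 2) : ℂ) *
        (Real.sqrt (1 - ‖ξ l‖ ^ 2) : ℂ) * z *
        ∏ j ∈ Finset.Ico (k+1) l, (z - ξ j)) /
      ((1 - (starRingEnd ℂ) (ξ l) * z) *
        ∏ j ∈ Finset.Ico k l, (1 - (starRingEnd ℂ) (ξ j) * z)) with hg_def
  have hg : DiffContOnCl ℂ g (ball 0 1) := by
    apply DifferentiableOn.diffContOnCl
    apply DifferentiableOn.div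
    · apply Differentiable.differentiableOn
      apply Differentiable.mul (by fun_prop)
      exact Differentiable.fun_finsetProd fun j _ => by fun_prop
    · apply Differentiable.differentiableOn
      apply Differentiable.mul (by fun_prop)
      exact Differentiable.fun_finsetProd fun j _ => by fun_prop
    · intro z hz
      exact mul_ne_zero (den_ne (hξ l) (abs_le_of_closure hz))
        (Finset.prod_ne_zero_iff.mpr fun j _ => den_ne (hξ j) (abs_le_of_closure hz))
  have hw : (0:ℂ) ∈ ball (0:ℂ) 1 := mem_ball_self one_pos
  have hkey := key_cauchy g hg 0 hw
    (fun ω => TM ξ k (Complex.exp (Complex.I * ω)) *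
      (starRingEnd ℂ) (TM ξ l (Complex.exp (Complex.I * ω))))
    (fun ω => tm_ortho_point ξ hξ hkl (habs ω))
  rw [circInner, hkey]
  show (_ * _ * (0:ℂ) * _) / _ = 0
  simp

lemma intervalIntegral_conj' {f : ℝ → ℂ} {a b : ℝ} :
    (∫ x in a..b, (starRingEnd ℂ) (f x)) = (starRingEnd ℂ) (∫ x in a..b, f x) := by
  unfold intervalIntegral
  rw [integral_conj, integral_conj, ← map_sub]

lemma circInner_conj_symm (f g : ℂ → ℂ) :
    circInner f g = (starRingEnd ℂ) (circInner g f) := by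
  unfold circInner
  rw [map_mul, ← intervalIntegral_conj']
  congr 1
  · rw [Complex.conj_ofReal]
  · refine intervalIntegral.integral_congr fun ω _ => ?_
    rw [map_mul, Complex.conj_conj, mul_comm]

/-- For any poles in the open unit disk, the TM basis functions are
orthonormal on the unit circle: ⟨ψ_k, ψ_l⟩ = 1 if k = l and 0 otherwise. -/
theorem tm_orthonormal (ξ : ℕ → ℂ) (hξ : ∀ j, ‖ξ j‖ < 1) (k l : ℕ) :
    circInner (TM ξ k) (TM ξ l) = if k = l then 1 else 0 := by
  rcases lt_trichotomy k l with h | h | h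
  · rw [if_neg h.ne]
    exact tm_ortho_lt ξ hξ h
  · subst h; rw [if_pos rfl]
    exact tm_norm ξ hξ k
  · rw [if_neg h.ne']
    rw [circInner_conj_symm, tm_ortho_lt ξ hξ h, map_zero]
end
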